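/- arXiv:0806.1652 — 2 statements merged into one kernel-verified Lean document; each statement's English description precedes it below -/
import Mathlib

section
/- For every n ≥ 1, every tuning parameter η_n > 0, all nonnegative real numbers a_n, b_n, and every θ ∈ ℝ, the coverage probability p_{A,n}(θ) = P_{n,θ}(θ ∈ [θ̂_A − a_n, θ̂_A + b_n]) equals Φ(n^{1/2} γ^{(−)}(θ, −a_n)) − Φ(n^{1/2} γ^{(−)}(θ, b_n)) if θ < −a_n; equals Φ(n^{1/2} γ^{(+)}(θ, −a_n)) − Φ(n^{1/2} γ^{(−)}(θ, b_n)) if −a_n ≤ θ ≤ b_n; and equals Φ(n^{1/2} γ^{(+)}(θ, −a_n)) − Φ(n^{1/2} γ^{(+)}(θ, b_n)) if θ > b_n, where γ^{(−)}(θ, x) = −((θ + x)/2) − sqrt(((θ − x)/2)² + η_n²) and γ^{(+)}(θ, x) = −((θ + x)/2) + sqrt(((θ − x)/2)² + η_n²). -/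
/-!
Off the dead zone `[-η, η]` the adaptive LASSO is `y ↦ y - η²/y`, and `y - η²/y = c` means
`y² - c y - η² = 0`, whose roots `c/2 ± √((c/2)² + η²)` have opposite signs. Hence the sets
`{ȳ | θ̂_A ≤ c}` and `{ȳ | c ≤ θ̂_A}` are half-lines ending at one of these roots, the one chosen by
the sign of `c`. So the coverage event is the interval `[θ + γ(θ, b), θ + γ(θ, -a)]` with the
appropriate signs of `γ`, and standardising `ȳ` turns its probability into a difference of two
values of `Φ`.
-/

open MeasureTheory ProbabilityTheory Filter
open scoped NNReal

/-- Standard normal cumulative distribution function Φ. -/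
noncomputable def stdNormCDF (x : ℝ) : ℝ :=
  ((gaussianReal 0 1) (Set.Iic x)).toReal

/-- Soft-thresholding (LASSO) estimator with threshold η, as a function of ȳ. -/
noncomputable def softThresh (η y : ℝ) : ℝ := Real.sign y * max (|y| - η) 0

/-- Hard-thresholding estimator with threshold η, as a function of ȳ. -/
noncomputable def hardThresh (η y : ℝ) : ℝ := if η < |y| then y else 0

/-- Adaptive LASSO estimator with tuning parameter η, as a function of ȳ. -/
noncomputable def adaLasso (η y : ℝ) : ℝ := if |y| ≤ η then 0 else y - η ^ 2 / y

/-- Coverage probability `P_{n,θ}(θ ∈ [est(ȳ) - a, est(ȳ) + b])` in the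
known-variance case (σ = 1), where ȳ ~ N(θ, 1/n). -/
noncomputable def cover (n : ℕ) (est : ℝ → ℝ) (a b θ : ℝ) : ℝ :=
  ((gaussianReal θ ((n : ℝ≥0))⁻¹)
    {y : ℝ | est y - a ≤ θ ∧ θ ≤ est y + b}).toReal

/-- The function `γ⁻(θ, x) = -((θ+x)/2) - √(((θ-x)/2)² + η²)`. -/
noncomputable def gammaMinus (η θ x : ℝ) : ℝ :=
  -((θ + x) / 2) - Real.sqrt (((θ - x) / 2) ^ 2 + η ^ 2)

/-- The function `γ⁺(θ, x) = -((θ+x)/2) + √(((θ-x)/2)² + η²)`. -/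
noncomputable def gammaPlus (η θ x : ℝ) : ℝ :=
  -((θ + x) / 2) + Real.sqrt (((θ - x) / 2) ^ 2 + η ^ 2)

open Set

section SubSqDiv

variable (η c : ℝ) {y : ℝ}

theorem sub_sq_div_le_iff_of_pos (hy : 0 < y) :
    y - η ^ 2 / y ≤ c ↔ y ≤ c / 2 + √((c / 2) ^ 2 + η ^ 2) := by
  set s := √((c / 2) ^ 2 + η ^ 2)
  have hs : s ^ 2 = (c / 2) ^ 2 + η ^ 2 := Real.sq_sqrt (by positivity)
  have hcs : |c / 2| ≤ s := Real.abs_le_sqrt (by nlinarith)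
  have hpos : 0 < y - (c / 2 - s) := by linarith [le_abs_self (c / 2)]
  have key : η ^ 2 - (y - c) * y = (c / 2 + s - y) * (y - (c / 2 - s)) := by
    linear_combination -hs
  rw [sub_le_comm, le_div_iff₀ hy, ← sub_nonneg, key, mul_nonneg_iff_of_pos_right hpos, sub_nonneg]

theorem sub_sq_div_le_iff_of_neg (hy : y < 0) :
    y - η ^ 2 / y ≤ c ↔ y ≤ c / 2 - √((c / 2) ^ 2 + η ^ 2) := by
  set s := √((c / 2) ^ 2 + η ^ 2)
  have hs : s ^ 2 = (c / 2) ^ 2 + η ^ 2 := Real.sq_sqrt (by positivity)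
  have hcs : |c / 2| ≤ s := Real.abs_le_sqrt (by nlinarith)
  have hpos : 0 < c / 2 + s - y := by linarith [neg_abs_le (c / 2)]
  have key : (y - c) * y - η ^ 2 = (c / 2 + s - y) * (c / 2 - s - y) := by
    linear_combination hs
  rw [sub_le_comm, le_div_iff_of_neg hy, ← sub_nonneg, key, mul_nonneg_iff_of_pos_left hpos,
    sub_nonneg]

end SubSqDiv

section AdaLasso

variable {η c y : ℝ}

theorem adaLasso_neg (η y : ℝ) : adaLasso η (-y) = -adaLasso η y := by
  unfold adaLasso
  rw [abs_neg]
  split_ifs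
  · simp
  · rw [div_neg]
    ring

theorem adaLasso_nonneg (hη : 0 ≤ η) (hy : 0 ≤ y) : 0 ≤ adaLasso η y := by
  unfold adaLasso
  split_ifs with hyη
  · rfl
  · rw [abs_of_nonneg hy, not_le] at hyη
    have hy : 0 < y := hη.trans_lt hyη
    rw [sub_nonneg, div_le_iff₀ hy]
    nlinarith

theorem adaLasso_nonpos (hη : 0 ≤ η) (hy : y ≤ 0) : adaLasso η y ≤ 0 := by
  simpa [adaLasso_neg] using adaLasso_nonneg (y := -y) hη (neg_nonneg.2 hy)

theorem adaLasso_le_iff_of_nonneg (hη : 0 ≤ η) (hc : 0 ≤ c) :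
    adaLasso η y ≤ c ↔ y ≤ c / 2 + √((c / 2) ^ 2 + η ^ 2) := by
  have hcs : |c / 2| ≤ √((c / 2) ^ 2 + η ^ 2) := Real.abs_le_sqrt (by nlinarith)
  have hηs : |η| ≤ √((c / 2) ^ 2 + η ^ 2) := Real.abs_le_sqrt (by nlinarith)
  rcases le_or_gt y 0 with hy | hy
  · exact iff_of_true ((adaLasso_nonpos hη hy).trans hc) (by linarith [neg_abs_le (c / 2)])
  · unfold adaLasso
    split_ifs with hyη
    · exact iff_of_true hc (by linarith [le_abs_self y, le_abs_self η])
    · exact sub_sq_div_le_iff_of_pos η c hy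

theorem adaLasso_le_iff_of_neg (hη : 0 ≤ η) (hc : c < 0) :
    adaLasso η y ≤ c ↔ y ≤ c / 2 - √((c / 2) ^ 2 + η ^ 2) := by
  have hηs : |η| ≤ √((c / 2) ^ 2 + η ^ 2) := Real.abs_le_sqrt (by nlinarith)
  rcases le_or_gt 0 y with hy | hy
  · exact iff_of_false (hc.trans_le (adaLasso_nonneg hη hy)).not_ge
      (by linarith [abs_nonneg η])
  · unfold adaLasso
    split_ifs with hyη
    · exact iff_of_false hc.not_ge (by linarith [neg_abs_le y, le_abs_self η])
    · exact sub_sq_div_le_iff_of_neg η c hy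

theorem le_adaLasso_iff_of_nonpos (hη : 0 ≤ η) (hc : c ≤ 0) :
    c ≤ adaLasso η y ↔ c / 2 - √((c / 2) ^ 2 + η ^ 2) ≤ y := by
  rw [← neg_le_neg_iff, ← adaLasso_neg, adaLasso_le_iff_of_nonneg hη (neg_nonneg.2 hc), neg_div,
    neg_sq]
  constructor <;> intro h <;> linarith

theorem le_adaLasso_iff_of_pos (hη : 0 ≤ η) (hc : 0 < c) :
    c ≤ adaLasso η y ↔ c / 2 + √((c / 2) ^ 2 + η ^ 2) ≤ y := by
  rw [← neg_le_neg_iff, ← adaLasso_neg, adaLasso_le_iff_of_neg hη (neg_neg_iff_pos.2 hc), neg_div,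
    neg_sq]
  constructor <;> intro h <;> linarith

end AdaLasso

theorem gaussianReal_real_Iic (μ : ℝ) {v : ℝ≥0} (hv : v ≠ 0) (t : ℝ) :
    (gaussianReal μ v).real (Iic t) = stdNormCDF ((t - μ) / √v) := by
  have hsv : 0 < √(v : ℝ) := Real.sqrt_pos.2 (by positivity)
  have hstd : (gaussianReal μ v).map (fun y ↦ (y - μ) / √v) = gaussianReal 0 1 := by
    rw [show (fun y ↦ (y - μ) / √v) = (· / √v) ∘ (· - μ) from rfl,
      ← Measure.map_map (by fun_prop) (by fun_prop), gaussianReal_map_sub_const,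
      gaussianReal_map_div_const]
    congr 1
    · simp
    · ext
      simp [Real.sq_sqrt, hv]
  have hpre : (fun y ↦ (y - μ) / √v) ⁻¹' Iic ((t - μ) / √v) = Iic t := by
    ext y
    simp [div_le_div_iff_of_pos_right hsv]
  rw [stdNormCDF, ← hstd, Measure.map_apply (by fun_prop) measurableSet_Iic, hpre,
    measureReal_def]

theorem gaussianReal_real_Icc (μ : ℝ) {v : ℝ≥0} (hv : v ≠ 0) {s t : ℝ} (hst : s ≤ t) :
    (gaussianReal μ v).real (Icc s t) =
      stdNormCDF ((t - μ) / √v) - stdNormCDF ((s - μ) / √v) := by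
  have hs : gaussianReal μ v {s} = 0 :=
    gaussianReal_absolutelyContinuous μ hv (measure_singleton s)
  rw [measureReal_congr (Ioc_ae_eq_Icc' hs).symm, ← Iic_sdiff_Iic,
    measureReal_sdiff (Iic_subset_Iic.2 hst) measurableSet_Iic, gaussianReal_real_Iic μ hv,
    gaussianReal_real_Iic μ hv]

theorem cover_eq_of_forall_iff {n : ℕ} (hn : n ≠ 0) {est : ℝ → ℝ} {a b θ l u : ℝ}
    (hab : 0 ≤ a + b) (hl : ∀ y, θ - b ≤ est y ↔ θ + l ≤ y)
    (hu : ∀ y, est y ≤ θ + a ↔ y ≤ θ + u) :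
    cover n est a b θ = stdNormCDF (√n * u) - stdNormCDF (√n * l) := by
  -- a point strictly between `θ + u` and `θ + l` would have `θ + a < est y < θ - b`
  have hlu : l ≤ u := by
    by_contra! h
    have hlo := (hl (θ + (l + u) / 2)).not.2 (by linarith)
    have hhi := (hu (θ + (l + u) / 2)).not.2 (by linarith)
    linarith [not_le.1 hlo, not_le.1 hhi]
  have hset : {y | est y - a ≤ θ ∧ θ ≤ est y + b} = Icc (θ + l) (θ + u) := by
    ext y
    rw [mem_ofPred_eq, mem_Icc, ← hl, ← hu, sub_le_iff_le_add, sub_le_iff_le_add, and_comm]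
  have hv : (n : ℝ≥0)⁻¹ ≠ 0 := inv_ne_zero (Nat.cast_ne_zero.2 hn)
  rw [cover, hset, ← measureReal_def, gaussianReal_real_Icc θ hv (by linarith)]
  simp [Real.sqrt_inv, mul_comm]

theorem add_gammaMinus (η θ x : ℝ) :
    θ + gammaMinus η θ x = (θ - x) / 2 - √(((θ - x) / 2) ^ 2 + η ^ 2) := by
  unfold gammaMinus
  ring

theorem add_gammaPlus (η θ x : ℝ) :
    θ + gammaPlus η θ x = (θ - x) / 2 + √(((θ - x) / 2) ^ 2 + η ^ 2) := by
  unfold gammaPlus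
  ring

/-- The finite-sample coverage probability of `[θ̂_A - a, θ̂_A + b]`, given piecewise
in `θ` (equation (cov)). -/
theorem stmt_4 (n : ℕ) (hn : 1 ≤ n) (η a b : ℝ) (hη : 0 < η) (ha : 0 ≤ a) (hb : 0 ≤ b)
    (θ : ℝ) :
    (θ < -a →
      cover n (adaLasso η) a b θ =
        stdNormCDF (Real.sqrt n * gammaMinus η θ (-a)) -
          stdNormCDF (Real.sqrt n * gammaMinus η θ b)) ∧
    (-a ≤ θ → θ ≤ b →
      cover n (adaLasso η) a b θ =
        stdNormCDF (Real.sqrt n * gammaPlus η θ (-a)) -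
          stdNormCDF (Real.sqrt n * gammaMinus η θ b)) ∧
    (b < θ →
      cover n (adaLasso η) a b θ =
        stdNormCDF (Real.sqrt n * gammaPlus η θ (-a)) -
          stdNormCDF (Real.sqrt n * gammaPlus η θ b)) := by
  have hn0 : n ≠ 0 := Nat.one_le_iff_ne_zero.1 hn
  have hab : 0 ≤ a + b := add_nonneg ha hb
  replace hη : 0 ≤ η := hη.le
  refine ⟨fun hθ ↦ ?_, fun hθa hθb ↦ ?_, fun hθ ↦ ?_⟩
  · exact cover_eq_of_forall_iff hn0 hab
      (fun y ↦ by rw [add_gammaMinus]; exact le_adaLasso_iff_of_nonpos hη (by linarith))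
      (fun y ↦ by
        rw [add_gammaMinus, sub_neg_eq_add]; exact adaLasso_le_iff_of_neg hη (by linarith))
  · exact cover_eq_of_forall_iff hn0 hab
      (fun y ↦ by rw [add_gammaMinus]; exact le_adaLasso_iff_of_nonpos hη (by linarith))
      (fun y ↦ by
        rw [add_gammaPlus, sub_neg_eq_add]; exact adaLasso_le_iff_of_nonneg hη (by linarith))
  · exact cover_eq_of_forall_iff hn0 hab
      (fun y ↦ by rw [add_gammaPlus]; exact le_adaLasso_iff_of_pos hη (by linarith))
      (fun y ↦ by
        rw [add_gammaPlus, sub_neg_eq_add]; exact adaLasso_le_iff_of_nonneg hη (by linarith))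
end

section
/- For every n ≥ 1, every tuning parameter η_n > 0 and every δ with 0 < δ < 1: the equation Φ(n^{1/2}(a − η_n)) − Φ(n^{1/2}(−a − η_n)) = δ has a unique solution a_{n,S}* in [0, ∞), this solution is positive, the interval [θ̂_S − a_{n,S}*, θ̂_S + a_{n,S}*] has infimal coverage probability inf_{θ∈ℝ} P_{n,θ}(θ ∈ [θ̂_S − a_{n,S}*, θ̂_S + a_{n,S}*]) exactly equal to δ, and among all pairs (a, b) of nonnegative reals for which inf_{θ∈ℝ} P_{n,θ}(θ ∈ [θ̂_S − a, θ̂_S + b]) ≥ δ the length a + b is uniquely minimized at a = b = a_{n,S}*. -/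
open MeasureTheory ProbabilityTheory Filter
open scoped NNReal

/-!
For `θ < -a` and for `θ > b` the coverage probability of `[θ̂_S - a, θ̂_S + b]` is constant, and
these two values, `Φ(√n (a - η)) - Φ(√n (-b - η))` and its mirror image with `a` and `b` swapped,
form its infimum. Both are standard normal masses of intervals of length `√n (a + b)`, centred at
`√n (±(a - b)/2 - η)`, and such a mass decreases as the centre moves left of `0`. As `η > 0`, the
worse of the two centres lies left of the symmetric one `-√n η`, strictly so unless `a = b`;
together with strict monotonicity of the symmetric coverage in `a`, this shows that no interval
of length at most `2 a*` other than `a = b = a*` reaches infimal coverage `δ`.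
-/

open Set
open scoped Topology

lemma stdNormCDF_eq_cdf : stdNormCDF = cdf (gaussianReal 0 1) := by
  ext x
  rw [cdf_eq_real]
  rfl

lemma stdNormCDF_eq_integral (x : ℝ) :
    stdNormCDF x = ∫ t in Iic x, gaussianPDFReal 0 1 t := by
  rw [stdNormCDF, gaussianReal_apply_eq_integral 0 one_ne_zero, ENNReal.toReal_ofReal
    (setIntegral_nonneg measurableSet_Iic fun _ _ ↦ gaussianPDFReal_nonneg ..)]

lemma hasDerivAt_stdNormCDF (x : ℝ) :
    HasDerivAt stdNormCDF (gaussianPDFReal 0 1 x) x := by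
  have hint := integrable_gaussianPDFReal 0 1
  have hcont : Continuous (gaussianPDFReal 0 1) := by
    rw [gaussianPDFReal_def]
    fun_prop
  have hsplit : stdNormCDF = fun y ↦ stdNormCDF 0 + ∫ t in (0 : ℝ)..y, gaussianPDFReal 0 1 t := by
    ext y
    rw [← intervalIntegral.integral_Iic_sub_Iic hint.integrableOn hint.integrableOn,
      stdNormCDF_eq_integral, stdNormCDF_eq_integral, add_sub_cancel]
  rw [hsplit]
  exact (intervalIntegral.integral_hasDerivAt_right hint.intervalIntegrable
    (hcont.stronglyMeasurableAtFilter _ _) hcont.continuousAt).const_add _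

@[fun_prop]
lemma continuous_stdNormCDF : Continuous stdNormCDF :=
  continuous_iff_continuousAt.mpr fun x ↦ (hasDerivAt_stdNormCDF x).continuousAt

lemma strictMono_stdNormCDF : StrictMono stdNormCDF :=
  strictMono_of_hasDerivAt_pos hasDerivAt_stdNormCDF fun _ ↦ gaussianPDFReal_pos _ _ _ one_ne_zero

lemma tendsto_stdNormCDF_atTop : Tendsto stdNormCDF atTop (𝓝 1) :=
  stdNormCDF_eq_cdf ▸ tendsto_cdf_atTop _

lemma tendsto_stdNormCDF_atBot : Tendsto stdNormCDF atBot (𝓝 0) :=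
  stdNormCDF_eq_cdf ▸ tendsto_cdf_atBot _

lemma stdNormCDF_neg (x : ℝ) : stdNormCDF (-x) = 1 - stdNormCDF x := by
  have := nullSingletonClass_gaussianReal (μ := 0) one_ne_zero
  have hneg : gaussianReal 0 1 (Iic (-x)) = gaussianReal 0 1 (Iio x)ᶜ := by
    conv_lhs => rw [← neg_zero, ← gaussianReal_map_neg]
    rw [Measure.map_apply measurable_neg measurableSet_Iic, compl_Iio]
    congr 1
    ext
    simp
  rw [stdNormCDF, stdNormCDF, hneg, prob_compl_eq_one_sub measurableSet_Iio,
    measure_congr Iio_ae_eq_Iic, ENNReal.toReal_sub_of_le prob_le_one ENNReal.one_ne_top,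
    ENNReal.toReal_one]

lemma gaussianPDFReal_lt_of_abs_sub_lt {μ : ℝ} {v : ℝ≥0} (hv : v ≠ 0) {x y : ℝ}
    (h : |x - μ| < |y - μ|) : gaussianPDFReal μ v y < gaussianPDFReal μ v x := by
  have hv' : (0 : ℝ) < v := by positivity
  simp only [gaussianPDFReal_def]
  gcongr (_ * Real.exp (- ?_ / _))
  exact sq_lt_sq.mpr h

lemma gaussianReal_Iic_toReal {μ : ℝ} {v : ℝ≥0} (hv : v ≠ 0) (x : ℝ) :
    (gaussianReal μ v (Iic x)).toReal = stdNormCDF ((x - μ) / √v) := by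
  have hσ : 0 < √(v : ℝ) := Real.sqrt_pos.mpr (by positivity)
  have hmap : gaussianReal μ v = (gaussianReal 0 1).map (fun z ↦ √v * z + μ) := by
    have hscale := gaussianReal_map_const_mul (μ := 0) (v := 1) √v
    rw [mul_zero, show NNReal.mk (√(v : ℝ) ^ 2) (sq_nonneg _) * 1 = v by
      ext; simp [Real.sq_sqrt v.coe_nonneg]] at hscale
    rw [show (fun z ↦ √v * z + μ) = (· + μ) ∘ (√v * ·) from rfl,
      ← Measure.map_map (by fun_prop) (by fun_prop), hscale, gaussianReal_map_add_const, zero_add]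
  rw [hmap, Measure.map_apply (by fun_prop) measurableSet_Iic, stdNormCDF]
  congr 3
  ext z
  simp only [mem_preimage, mem_Iic, le_div_iff₀ hσ]
  constructor <;> intro h <;> linarith

lemma gaussianReal_Icc_toReal {μ : ℝ} {v : ℝ≥0} (hv : v ≠ 0) {x y : ℝ} (hxy : x ≤ y) :
    (gaussianReal μ v (Icc x y)).toReal
      = stdNormCDF ((y - μ) / √v) - stdNormCDF ((x - μ) / √v) := by
  have := nullSingletonClass_gaussianReal (μ := μ) hv
  rw [← gaussianReal_Iic_toReal hv, ← gaussianReal_Iic_toReal hv, ← measure_congr Ioc_ae_eq_Icc,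
    ← Iic_sdiff_Iic]
  exact measureReal_sdiff (Iic_subset_Iic.mpr hxy) measurableSet_Iic

/-- `Φ (t + c) - Φ t` is the mass of `[t, t + c]`, which grows as the interval moves towards
being centred at `0`. -/
lemma strictMonoOn_stdNormCDF_add_sub_stdNormCDF {c : ℝ} (hc : 0 < c) :
    StrictMonoOn (fun t ↦ stdNormCDF (t + c) - stdNormCDF t) (Iic (-c / 2)) := by
  have hderiv (t : ℝ) : HasDerivAt (fun t ↦ stdNormCDF (t + c) - stdNormCDF t)
      (gaussianPDFReal 0 1 (t + c) - gaussianPDFReal 0 1 t) t :=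
    ((hasDerivAt_stdNormCDF (t + c)).comp_add_const t c).sub (hasDerivAt_stdNormCDF t)
  refine strictMonoOn_of_deriv_pos (convex_Iic _)
    (fun t _ ↦ (hderiv t).continuousAt.continuousWithinAt) fun t ht ↦ ?_
  rw [interior_Iic, mem_Iio] at ht
  rw [(hderiv t).deriv, sub_pos]
  refine gaussianPDFReal_lt_of_abs_sub_lt one_ne_zero ?_
  rw [sub_zero, sub_zero, abs_lt, abs_of_neg (by linarith)]
  constructor <;> linarith

/-- The coverage probability of `[softThresh η ȳ - a, softThresh η ȳ + b]` at every `θ < -a`,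
where `s = √n`. -/
noncomputable def softCoverTail (s η a b : ℝ) : ℝ :=
  stdNormCDF (s * (a - η)) - stdNormCDF (s * (-b - η))

section softCoverTail

variable {s η : ℝ}

lemma strictMono_softCoverTail_left (hs : 0 < s) (b : ℝ) :
    StrictMono fun a ↦ softCoverTail s η a b := fun _ _ h ↦
  sub_lt_sub_right (strictMono_stdNormCDF (by gcongr)) _

lemma strictMono_softCoverTail_right (hs : 0 < s) (a : ℝ) :
    StrictMono fun b ↦ softCoverTail s η a b := fun _ _ h ↦
  sub_lt_sub_left (strictMono_stdNormCDF (by gcongr)) _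

lemma strictMono_softCoverTail_diag (hs : 0 < s) : StrictMono fun a ↦ softCoverTail s η a a :=
  fun _ _ h ↦ (strictMono_softCoverTail_left hs _ h).trans (strictMono_softCoverTail_right hs _ h)

lemma exists_pos_softCoverTail_diag_eq (hs : 0 < s) {δ : ℝ} (hδ0 : 0 < δ) (hδ1 : δ < 1) :
    ∃ a, 0 < a ∧ softCoverTail s η a a = δ := by
  have hzero : softCoverTail s η 0 0 = 0 := by simp [softCoverTail]
  have hlim : Tendsto (fun a ↦ softCoverTail s η a a) atTop (𝓝 1) := by
    have hpos : Tendsto (fun a ↦ s * (a - η)) atTop atTop :=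
      (tendsto_atTop_add_const_right _ _ tendsto_id).const_mul_atTop hs
    have hneg : Tendsto (fun a ↦ s * (-a - η)) atTop atBot :=
      (tendsto_atBot_add_const_right _ _ tendsto_neg_atTop_atBot).const_mul_atBot hs
    simpa [softCoverTail] using
      (tendsto_stdNormCDF_atTop.comp hpos).sub (tendsto_stdNormCDF_atBot.comp hneg)
  obtain ⟨M, hM, hM0⟩ := ((hlim.eventually (eventually_gt_nhds hδ1)).and
    (eventually_ge_atTop 0)).exists
  have hcont : Continuous fun a ↦ softCoverTail s η a a := by
    unfold softCoverTail
    fun_prop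
  obtain ⟨a, ha, hfa⟩ := intermediate_value_Icc hM0 hcont.continuousOn
    ⟨hzero.symm ▸ hδ0.le, hM.le⟩
  refine ⟨a, ha.1.lt_of_ne ?_, hfa⟩
  rintro rfl
  exact hδ0.ne' (hfa.symm.trans hzero)

lemma lt_add_of_softCoverTail_diag_le (hs : 0 < s) (hη : 0 ≤ η) {a a' b : ℝ} (ha' : 0 < a')
    (haa' : a < a') (h : softCoverTail s η a' a' ≤ softCoverTail s η a b) : a' + a' < a + b := by
  by_contra! hle
  have hc : 0 < 2 * s * a' := by positivity
  -- both coverages are masses of intervals of length `2 s a'`; the one for `(a, 2a' - a)` lies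
  -- further left of the origin
  have hshift := strictMonoOn_stdNormCDF_add_sub_stdNormCDF hc
    (a := s * (-(2 * a' - a) - η)) (b := s * (-a' - η))
    (by rw [mem_Iic]; nlinarith) (by rw [mem_Iic]; nlinarith) (by gcongr; linarith)
  have hmono := (strictMono_softCoverTail_right (η := η) hs a).monotone
    (show b ≤ 2 * a' - a by linarith)
  dsimp only at hshift
  rw [show s * (-(2 * a' - a) - η) + 2 * s * a' = s * (a - η) by ring,
    show s * (-a' - η) + 2 * s * a' = s * (a' - η) by ring] at hshift
  simp only [softCoverTail] at h hmono
  linarith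

lemma eq_and_eq_or_lt_add_of_softCoverTail_diag_le_min (hs : 0 < s) (hη : 0 ≤ η) {a a' b : ℝ}
    (ha' : 0 < a')
    (h : softCoverTail s η a' a' ≤ min (softCoverTail s η a b) (softCoverTail s η b a)) :
    (a = a' ∧ b = a') ∨ a' + a' < a + b := by
  rcases lt_or_ge a a' with haa' | haa'
  · exact .inr (lt_add_of_softCoverTail_diag_le hs hη ha' haa' (h.trans (min_le_left ..)))
  rcases lt_or_ge b a' with hba' | hba'
  · exact .inr (add_comm b a ▸
      lt_add_of_softCoverTail_diag_le hs hη ha' hba' (h.trans (min_le_right ..)))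
  rcases haa'.eq_or_lt with rfl | haa' <;> rcases hba'.eq_or_lt with rfl | hba'
  · exact .inl ⟨rfl, rfl⟩
  all_goals exact .inr (by linarith)

end softCoverTail

section softThresh

variable {η : ℝ}

lemma softThresh_eq_ite (hη : 0 ≤ η) (y : ℝ) :
    softThresh η y = if y < -η then y + η else if y ≤ η then 0 else y - η := by
  rcases lt_trichotomy y 0 with hy | rfl | hy
  · rw [softThresh, Real.sign_of_neg hy, abs_of_neg hy]
    split_ifs <;> simp only [max_def] <;> split_ifs <;> linarith
  · simp [softThresh, hη, not_lt.mpr hη]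
  · rw [softThresh, Real.sign_of_pos hy, abs_of_pos hy]
    split_ifs <;> simp only [max_def] <;> split_ifs <;> linarith

lemma softThresh_le_iff (hη : 0 ≤ η) (y c : ℝ) :
    softThresh η y ≤ c ↔ y ≤ c + if 0 ≤ c then η else -η := by
  rw [softThresh_eq_ite hη]
  split_ifs <;> constructor <;> intro <;> linarith

lemma le_softThresh_iff (hη : 0 ≤ η) (y c : ℝ) :
    c ≤ softThresh η y ↔ c + (if 0 < c then η else -η) ≤ y := by
  rw [softThresh_eq_ite hη]
  split_ifs <;> constructor <;> intro <;> linarith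

end softThresh

section cover

variable {n : ℕ} {η a b : ℝ}

lemma cover_softThresh (hn : 1 ≤ n) (hη : 0 ≤ η) (ha : 0 ≤ a) (hb : 0 ≤ b) (θ : ℝ) :
    cover n (softThresh η) a b θ =
      stdNormCDF (√n * (a + if 0 ≤ θ + a then η else -η))
        - stdNormCDF (√n * (-b + if 0 < θ - b then η else -η)) := by
  have hv : ((n : ℝ≥0))⁻¹ ≠ 0 := inv_ne_zero (by exact_mod_cast (by omega : n ≠ 0))
  have hset : {y : ℝ | softThresh η y - a ≤ θ ∧ θ ≤ softThresh η y + b} =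
      Icc (θ - b + if 0 < θ - b then η else -η) (θ + a + if 0 ≤ θ + a then η else -η) := by
    ext y
    rw [mem_Icc, ← softThresh_le_iff hη, ← le_softThresh_iff hη, and_comm]
    exact and_congr sub_le_iff_le_add sub_le_iff_le_add.symm
  have hscale (x : ℝ) : (x - θ) / √(((n : ℝ≥0))⁻¹ : ℝ≥0) = √n * (x - θ) := by
    rw [NNReal.coe_inv, NNReal.coe_natCast, Real.sqrt_inv, div_inv_eq_mul, mul_comm]
  rw [cover, hset, gaussianReal_Icc_toReal hv (by split_ifs <;> linarith), hscale, hscale]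
  congr 3 <;> ring

lemma iInf_cover_softThresh (hn : 1 ≤ n) (hη : 0 ≤ η) (ha : 0 ≤ a) (hb : 0 ≤ b) :
    ⨅ θ, cover n (softThresh η) a b θ
      = min (softCoverTail √n η a b) (softCoverTail √n η b a) := by
  have hflip : stdNormCDF (√n * (a + η)) - stdNormCDF (√n * (-b + η)) = softCoverTail √n η b a := by
    rw [softCoverTail, show √n * (-b + η) = -(√n * (b - η)) by ring,
      show √n * (-a - η) = -(√n * (a + η)) by ring, stdNormCDF_neg, stdNormCDF_neg]
    ring
  have hcover := cover_softThresh hn hη ha hb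
  have hbdd : BddBelow (range fun θ ↦ cover n (softThresh η) a b θ) :=
    ⟨0, by rintro _ ⟨θ, rfl⟩; exact ENNReal.toReal_nonneg⟩
  refine le_antisymm (le_min ?_ ?_) (le_ciInf fun θ ↦ ?_)
  · refine (ciInf_le hbdd (-a - 1)).trans_eq ?_
    rw [hcover, if_neg (by linarith), if_neg (by linarith)]
    simp only [softCoverTail, sub_eq_add_neg]
  · refine (ciInf_le hbdd (b + 1)).trans_eq ?_
    rw [hcover, if_pos (by linarith), if_pos (by linarith), hflip]
  rw [hcover]
  split_ifs with hθa hθb hθb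
  · exact (min_le_right ..).trans_eq hflip.symm
  · refine (min_le_left ..).trans ?_
    simp only [softCoverTail, sub_eq_add_neg]
    exact add_le_add_left (strictMono_stdNormCDF.monotone (by gcongr; linarith)) _
  · linarith
  · exact (min_le_left ..).trans_eq (by simp only [softCoverTail, sub_eq_add_neg])

end cover

/-- Theorem 1(a): the shortest δ-level interval based on the soft-thresholding estimator. -/
theorem stmt_6 (n : ℕ) (hn : 1 ≤ n) (η : ℝ) (hη : 0 < η) (δ : ℝ) (hδ0 : 0 < δ)
    (hδ1 : δ < 1) :
    ∃ astar : ℝ, 0 ≤ astar ∧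
      -- `astar` solves the equation
      stdNormCDF (Real.sqrt n * (astar - η)) - stdNormCDF (Real.sqrt n * (-astar - η)) = δ ∧
      -- and it is the unique nonnegative solution
      (∀ a : ℝ, 0 ≤ a →
        stdNormCDF (Real.sqrt n * (a - η)) - stdNormCDF (Real.sqrt n * (-a - η)) = δ →
        a = astar) ∧
      -- it is positive
      0 < astar ∧
      -- the corresponding symmetric interval has infimal coverage probability exactly δ
      (⨅ θ : ℝ, cover n (softThresh η) astar astar θ) = δ ∧
      -- among all intervals with infimal coverage probability ≥ δ,
      -- the length is minimized at (astar, astar) ...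
      (∀ a b : ℝ, 0 ≤ a → 0 ≤ b →
        δ ≤ (⨅ θ : ℝ, cover n (softThresh η) a b θ) →
        astar + astar ≤ a + b) ∧
      -- ... and uniquely so
      (∀ a b : ℝ, 0 ≤ a → 0 ≤ b →
        δ ≤ (⨅ θ : ℝ, cover n (softThresh η) a b θ) →
        a + b = astar + astar → a = astar ∧ b = astar) := by
  have hs : 0 < √(n : ℝ) := Real.sqrt_pos.mpr (by exact_mod_cast hn)
  obtain ⟨astar, hpos, hroot⟩ := exists_pos_softCoverTail_diag_eq (η := η) hs hδ0 hδ1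
  have hshortest (a b : ℝ) (ha : 0 ≤ a) (hb : 0 ≤ b)
      (hcov : δ ≤ ⨅ θ, cover n (softThresh η) a b θ) :
      (a = astar ∧ b = astar) ∨ astar + astar < a + b := by
    rw [iInf_cover_softThresh hn hη.le ha hb, ← hroot] at hcov
    exact eq_and_eq_or_lt_add_of_softCoverTail_diag_le_min hs hη.le hpos hcov
  refine ⟨astar, hpos.le, hroot, fun a _ ha ↦ (strictMono_softCoverTail_diag hs).injective
    (ha.trans hroot.symm), hpos, ?_, fun a b ha hb hcov ↦ ?_, fun a b ha hb hcov hsum ↦ ?_⟩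
  · rw [iInf_cover_softThresh hn hη.le hpos.le hpos.le, min_self, hroot]
  · rcases hshortest a b ha hb hcov with ⟨rfl, rfl⟩ | hlt
    exacts [le_rfl, hlt.le]
  · exact (hshortest a b ha hb hcov).resolve_right hsum.not_gt
end
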